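/- arXiv:1806.11135 — 2 statements merged into one kernel-verified Lean document; each statement's English description precedes it below -/
import Mathlib

section
/- Let β > 0, r₀ > 0, α > 3, m > 0, M ≥ 0, L ≥ 0, and set ρ(r) = (1+r²)^{α/2}. Let u, u₀, y, y₀ : (0, r₀] → ℝ be functions with y(r) ≥ m and 0 ≤ y₀(r) ≤ M for all r ∈ (0, r₀], and define g(r) = y(r)·e^{−βu(r)} and g₀(r) = y₀(r)·e^{−βu₀(r)}. Set δ = sup_{0<r≤r₀} ρ(r)|u₀(r) − u(r)| and assume δ ≤ 1 and sup_{0<r≤r₀} |y₀(r) − y(r)| ≤ L·δ. Then for every r ∈ (0, r₀], ρ(r)·|g₀(r) − g(r)|/g(r) ≤ (ρ(r₀)/m)·(L + M·β·e^{β})·δ. -/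
/-! Writing `g₀ = g · (y₀/y) · e^{β(u - u₀)}`, the relative error `|g₀ - g|/g` is at most
`(|y₀ - y| + y₀ |e^{β(u - u₀)} - 1|)/y`. On the core region `ρ ≥ 1`, so `|u₀ - u| ≤ δ ≤ 1`
and `|e^s - 1| ≤ |s| e^{|s|}` turns the exponential factor into `β e^β |u₀ - u|`; the weight
`ρ(r)` is then absorbed by `ρ(r) |u₀ - u| ≤ δ` and by the monotonicity `ρ(r) ≤ ρ(r₀)`. -/

open Real

theorem abs_exp_sub_one_le_abs_mul_exp_abs (t : ℝ) : |exp t - 1| ≤ |t| * exp |t| := by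
  rcases le_total 0 t with ht | ht
  · have h : (1 - t) * exp t ≤ 1 := by
      simpa [← exp_add] using mul_le_mul_of_nonneg_right (one_sub_le_exp_neg t) (exp_pos t).le
    rw [abs_of_nonneg (by linarith [one_le_exp ht]), abs_of_nonneg ht]
    linarith
  · rw [abs_of_nonpos (by linarith [exp_le_one_iff.mpr ht]), abs_of_nonpos ht]
    calc -(exp t - 1) ≤ -t := by linarith [add_one_le_exp t]
      _ ≤ -t * exp (-t) := le_mul_of_one_le_right (by linarith) (one_le_exp (by linarith))

theorem one_le_one_add_sq_rpow {p : ℝ} (hp : 0 ≤ p) (r : ℝ) : 1 ≤ (1 + r ^ 2) ^ p :=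
  one_le_rpow (le_add_of_nonneg_right (sq_nonneg r)) hp

theorem one_add_sq_rpow_le_of_le {p r s : ℝ} (hp : 0 ≤ p) (hr : 0 ≤ r) (hrs : r ≤ s) :
    (1 + r ^ 2) ^ p ≤ (1 + s ^ 2) ^ p :=
  rpow_le_rpow (by positivity) (by gcongr) hp

theorem abs_mul_exp_sub_mul_exp_div_le {y y₀ : ℝ} (hy : 0 < y) (hy₀ : 0 ≤ y₀) (a b : ℝ) :
    |y₀ * exp a - y * exp b| / (y * exp b)
      ≤ (|y₀ - y| + y₀ * (|a - b| * exp |a - b|)) / y := by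
  have hsplit : y₀ * exp a - y * exp b = ((y₀ - y) + y₀ * (exp (a - b) - 1)) * exp b := by
    rw [exp_sub]; field_simp; ring
  rw [hsplit, abs_mul, abs_of_pos (exp_pos b), mul_comm y, ← div_div,
    mul_div_cancel_right₀ _ (exp_pos b).ne']
  gcongr
  calc |y₀ - y + y₀ * (exp (a - b) - 1)| ≤ |y₀ - y| + |y₀ * (exp (a - b) - 1)| := abs_add_le _ _
    _ ≤ |y₀ - y| + y₀ * (|a - b| * exp |a - b|) := by
      rw [abs_mul, abs_of_nonneg hy₀]
      gcongr
      exact abs_exp_sub_one_le_abs_mul_exp_abs _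

theorem weighted_relative_error_le {β m M L ρ ρ₀ δ y y₀ u u₀ : ℝ} (hβ : 0 ≤ β) (hm : 0 < m)
    (hy : m ≤ y) (hy₀ : 0 ≤ y₀) (hy₀M : y₀ ≤ M) (hρ : 1 ≤ ρ) (hρρ₀ : ρ ≤ ρ₀)
    (hΔ : ρ * |u₀ - u| ≤ δ) (hδ1 : δ ≤ 1) (hyy₀ : |y₀ - y| ≤ L * δ) :
    ρ * |y₀ * exp (-(β * u₀)) - y * exp (-(β * u))| / (y * exp (-(β * u)))
      ≤ ρ₀ / m * (L + M * β * exp β) * δ := by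
  set ε := |u₀ - u|
  have hε : ε ≤ δ := le_trans (le_mul_of_one_le_left (abs_nonneg _) hρ) hΔ
  have hδ : 0 ≤ δ := (abs_nonneg _).trans hε
  have hLδ : 0 ≤ L * δ := (abs_nonneg _).trans hyy₀
  have hρ₀ : 0 ≤ ρ₀ := by linarith
  have hexp_arg : |-(β * u₀) - -(β * u)| = β * ε := by
    rw [show -(β * u₀) - -(β * u) = β * (u - u₀) by ring, abs_mul, abs_of_nonneg hβ,
      abs_sub_comm]
  have hβε : β * ε ≤ β := mul_le_of_le_one_right hβ (hε.trans hδ1)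
  have hM : 0 ≤ M := hy₀.trans hy₀M
  have hMβ : 0 ≤ M * β * exp β * δ := by positivity
  calc ρ * |y₀ * exp (-(β * u₀)) - y * exp (-(β * u))| / (y * exp (-(β * u)))
      = ρ * (|y₀ * exp (-(β * u₀)) - y * exp (-(β * u))| / (y * exp (-(β * u)))) :=
        mul_div_assoc _ _ _
    _ ≤ ρ * ((|y₀ - y| + y₀ * (β * ε * exp (β * ε))) / y) := by
      refine mul_le_mul_of_nonneg_left ?_ (by linarith)
      simpa only [hexp_arg] using
        abs_mul_exp_sub_mul_exp_div_le (hm.trans_le hy) hy₀ (-(β * u₀)) (-(β * u))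
    _ = (ρ * |y₀ - y| + y₀ * β * exp (β * ε) * (ρ * ε)) / y := by ring
    _ ≤ (ρ₀ * (L * δ) + M * β * exp β * δ) / y := by
      have hsecond : y₀ * β * exp (β * ε) * (ρ * ε) ≤ M * β * exp β * δ := by gcongr
      exact div_le_div_of_nonneg_right
        (add_le_add (mul_le_mul hρρ₀ hyy₀ (abs_nonneg _) hρ₀) hsecond) (by linarith)
    _ ≤ (ρ₀ * (L * δ) + ρ₀ * (M * β * exp β * δ)) / m := by
      refine div_le_div₀ (by positivity) ?_ hm hy
      exact add_le_add_right (le_mul_of_one_le_left hMβ (hρ.trans hρρ₀)) _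
    _ = ρ₀ / m * (L + M * β * exp β) * δ := by ring

theorem hncn_core_region_estimate_general (β r₀ α m M L : ℝ)
    (hβ : 0 < β) (hα : 3 < α)
    (hm : 0 < m)
    (u u₀ y y₀ g g₀ : ℝ → ℝ)
    (hy : ∀ r, 0 < r → r ≤ r₀ → m ≤ y r)
    (hy₀ : ∀ r, 0 < r → r ≤ r₀ → 0 ≤ y₀ r ∧ y₀ r ≤ M)
    (hg : ∀ r, 0 < r → r ≤ r₀ → g r = y r * Real.exp (-(β * u r)))
    (hg₀ : ∀ r, 0 < r → r ≤ r₀ → g₀ r = y₀ r * Real.exp (-(β * u₀ r)))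
    (δ : ℝ)
    (hbdd : BddAbove (Set.range fun r : Set.Ioc (0 : ℝ) r₀ =>
      (1 + (r : ℝ) ^ 2) ^ (α / 2) * |u₀ (r : ℝ) - u (r : ℝ)|))
    (hδ : δ = ⨆ r : Set.Ioc (0 : ℝ) r₀,
      (1 + (r : ℝ) ^ 2) ^ (α / 2) * |u₀ (r : ℝ) - u (r : ℝ)|)
    (hδ1 : δ ≤ 1)
    (hyy₀ : ∀ r, 0 < r → r ≤ r₀ → |y₀ r - y r| ≤ L * δ) :
    ∀ r, 0 < r → r ≤ r₀ →
      (1 + r ^ 2) ^ (α / 2) * |g₀ r - g r| / g r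
        ≤ ((1 + r₀ ^ 2) ^ (α / 2) / m) * (L + M * β * Real.exp β) * δ := by
  intro r hr hrr₀
  have hp : 0 ≤ α / 2 := by linarith
  have hΔ : (1 + r ^ 2) ^ (α / 2) * |u₀ r - u r| ≤ δ :=
    hδ ▸ le_ciSup hbdd (⟨r, hr, hrr₀⟩ : Set.Ioc (0 : ℝ) r₀)
  rw [hg r hr hrr₀, hg₀ r hr hrr₀]
  exact weighted_relative_error_le hβ.le hm (hy r hr hrr₀) (hy₀ r hr hrr₀).1 (hy₀ r hr hrr₀).2
    (one_le_one_add_sq_rpow hp r) (one_add_sq_rpow_le_of_le hp hr.le hrr₀) hΔ hδ1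
    (hyy₀ r hr hrr₀)

/-- Core-region estimate in the proof of Theorem 4.2 (conditional
well-posedness of the HNCN iteration): with g = y e^{-βu}, g₀ = y₀ e^{-βu₀},
y ≥ m, 0 ≤ y₀ ≤ M, δ = sup_{0<r≤r₀} ρ(r)|u₀(r)-u(r)| ≤ 1 and
sup_{0<r≤r₀} |y₀ - y| ≤ Lδ, one has
ρ(r)|g₀(r)-g(r)|/g(r) ≤ (ρ(r₀)/m)(L + Mβe^β)δ on (0,r₀]. -/
theorem hncn_core_region_estimate (β r₀ α m M L : ℝ)
    (hβ : 0 < β) (hr₀ : 0 < r₀) (hα : 3 < α)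
    (hm : 0 < m) (hM : 0 ≤ M) (hL : 0 ≤ L)
    (u u₀ y y₀ g g₀ : ℝ → ℝ)
    (hy : ∀ r, 0 < r → r ≤ r₀ → m ≤ y r)
    (hy₀ : ∀ r, 0 < r → r ≤ r₀ → 0 ≤ y₀ r ∧ y₀ r ≤ M)
    (hg : ∀ r, 0 < r → r ≤ r₀ → g r = y r * Real.exp (-(β * u r)))
    (hg₀ : ∀ r, 0 < r → r ≤ r₀ → g₀ r = y₀ r * Real.exp (-(β * u₀ r)))
    (δ : ℝ)
    (hbdd : BddAbove (Set.range fun r : Set.Ioc (0 : ℝ) r₀ =>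
      (1 + (r : ℝ) ^ 2) ^ (α / 2) * |u₀ (r : ℝ) - u (r : ℝ)|))
    (hδ : δ = ⨆ r : Set.Ioc (0 : ℝ) r₀,
      (1 + (r : ℝ) ^ 2) ^ (α / 2) * |u₀ (r : ℝ) - u (r : ℝ)|)
    (hδ1 : δ ≤ 1)
    (hyy₀ : ∀ r, 0 < r → r ≤ r₀ → |y₀ r - y r| ≤ L * δ) :
    ∀ r, 0 < r → r ≤ r₀ →
      (1 + r ^ 2) ^ (α / 2) * |g₀ r - g r| / g r
        ≤ ((1 + r₀ ^ 2) ^ (α / 2) / m) * (L + M * β * Real.exp β) * δ :=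
  hncn_core_region_estimate_general β r₀ α m M L hβ hα hm u u₀ y y₀ g g₀ hy hy₀ hg hg₀ δ hbdd hδ hδ1
    hyy₀
end

section
/- Let α > 3, ρ_α(x) = (1+|x|²)^{α/2}, and q ∈ (0,1). There exists a constant C > 0, depending only on α and q, with the following property: for every measurable w : ℝ³ → ℝ with ‖w‖_{L^∞_ρ} = ess sup_x ρ_α(x)|w(x)| < ∞ and ∫_{ℝ³} |w(x)| dx ≤ q, the series Σ_{n≥1} W_n of the n-fold autoconvolutions W_n = w * w * ⋯ * w (n factors, W₁ = w) converges in the norm ‖·‖_{L^∞_ρ} to a function W_Σ with ‖W_Σ‖_{L^∞_ρ} ≤ C · ‖w‖_{L^∞_ρ}; that is, ess sup_x ρ_α(x)|W_Σ(x) − Σ_{n=1}^N W_n(x)| → 0 as N → ∞. -/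
/-!
Split `x = (x - y) + y`: either `‖y‖ < ‖x‖ / m` and then `‖x - y‖ ≥ (1 - 1/m) ‖x‖`, or
`‖x‖ ≤ m ‖y‖`. Hence `ρ(x) ≤ (m/(m-1))^α ρ(x - y) + m^α ρ(y)`, and integrating against
`|f(x - y)| |g(y)|` gives
`‖f * g‖_ρ ≤ (m/(m-1))^α ‖f‖_ρ ‖g‖₁ + m^α ‖g‖_ρ ‖f‖₁`.
Since `‖W_n‖₁ ≤ q^n`, the choice `m = n + 1` in the step from `W_n` to `W_{n+1}` makes
`‖W_n‖_ρ ≤ n^(α+1) q^(n-1) ‖w‖_ρ` propagate by induction. This majorant is summable, so the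
series converges absolutely a.e., with `L^∞_ρ` tails bounded by the tails of the majorant, and
`C = ∑ n^(α+1) q^(n-1)`.
-/

open MeasureTheory

noncomputable section

abbrev E3 := EuclideanSpace ℝ (Fin 3)

/-- Weighted L^∞ norm with weight ρ_α(x) = (1+|x|²)^{α/2}. -/
def weightedNorm (α : ℝ) (f : E3 → ℝ) : ENNReal :=
  essSup (fun x => ENNReal.ofReal ((1 + ‖x‖ ^ 2) ^ (α / 2) * |f x|)) volume

/-- Convolution on ℝ³: (f*g)(x) = ∫ f(x-y) g(y) dy. -/
def conv3 (f g : E3 → ℝ) : E3 → ℝ := fun x => ∫ y, f (x - y) * g y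

/-- Fourier transform of a real-valued function on ℝ³:
𝓕f(ξ) = ∫ f(x) e^{-2πi x·ξ} dx. -/
def FT (f : E3 → ℝ) : E3 → ℂ := FourierTransform.fourier (fun x => (f x : ℂ))

/-- A function on ℝ³ is radial if it only depends on the norm. -/
def IsRadial (f : E3 → ℝ) : Prop := ∀ x y : E3, ‖x‖ = ‖y‖ → f x = f y
/-- n-fold autoconvolution: iterConv w 0 = W₁ = w, iterConv w n = W_{n+1}. -/
def iterConv (w : E3 → ℝ) : ℕ → (E3 → ℝ)
  | 0 => w
  | n + 1 => conv3 (iterConv w n) w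

open Filter Topology

section Weight

variable {E : Type*} [SeminormedAddCommGroup E]

def rho (α : ℝ) (x : E) : ℝ := (1 + ‖x‖ ^ 2) ^ (α / 2)

lemma rho_pos (α : ℝ) (x : E) : 0 < rho α x := by
  unfold rho; positivity

lemma rho_le_rpow_mul_rho {α c : ℝ} (hα : 0 ≤ α) (hc : 1 ≤ c) {x z : E}
    (h : ‖x‖ ≤ c * ‖z‖) : rho α x ≤ c ^ α * rho α z := by
  have hc0 : 0 ≤ c := zero_le_one.trans hc
  have hsq : 1 + ‖x‖ ^ 2 ≤ c ^ 2 * (1 + ‖z‖ ^ 2) := by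
    nlinarith [pow_le_pow_left₀ (norm_nonneg x) h 2, norm_nonneg z]
  calc rho α x ≤ (c ^ 2 * (1 + ‖z‖ ^ 2)) ^ (α / 2) := by
        unfold rho; gcongr
    _ = c ^ α * rho α z := by
        rw [Real.mul_rpow (by positivity) (by positivity), ← Real.rpow_natCast,
          ← Real.rpow_mul hc0, rho]
        ring_nf

lemma rho_le_mul_rho_sub_add_mul_rho {α m : ℝ} (hα : 0 ≤ α) (hm : 1 < m) (x y : E) :
    rho α x ≤ (m / (m - 1)) ^ α * rho α (x - y) + m ^ α * rho α y := by
  have hm1 : 0 < m - 1 := by linarith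
  have hc : 1 ≤ m / (m - 1) := by rw [le_div_iff₀ hm1]; linarith
  have hterm₁ : 0 ≤ (m / (m - 1)) ^ α * rho α (x - y) := by
    have := rho_pos α (x - y); positivity
  have hterm₂ : 0 ≤ m ^ α * rho α y := by
    have := rho_pos α y; positivity
  rcases le_or_gt (m * ‖y‖) ‖x‖ with hy | hy
  · have hx : ‖x‖ ≤ m / (m - 1) * ‖x - y‖ := by
      rw [div_mul_eq_mul_div, le_div_iff₀ hm1]
      nlinarith [norm_sub_norm_le x y]
    linarith [rho_le_rpow_mul_rho hα hc hx]
  · have hx : ‖x‖ ≤ m * ‖y‖ := hy.le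
    linarith [rho_le_rpow_mul_rho hα hm.le hx]

end Weight

lemma integrable_inv_rho {E : Type*} [NormedAddCommGroup E] [NormedSpace ℝ E] [FiniteDimensional ℝ E]
    [MeasurableSpace E] [BorelSpace E] (μ : Measure E) [μ.IsAddHaarMeasure] {α : ℝ}
    (hα : (Module.finrank ℝ E : ℝ) < α) : Integrable (fun x : E => (rho α x)⁻¹) μ := by
  refine (integrable_rpow_neg_one_add_norm_sq hα).congr (.of_forall fun x => ?_)
  simp only [rho, neg_div, Real.rpow_neg (by positivity : (0:ℝ) ≤ 1 + ‖x‖ ^ 2)]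


section WeightedNorm

variable {α : ℝ} {f : E3 → ℝ}

lemma ae_rho_mul_abs_le_toReal_weightedNorm (hf : weightedNorm α f < ⊤) :
    ∀ᵐ x, rho α x * |f x| ≤ (weightedNorm α f).toReal := by
  filter_upwards [ENNReal.ae_le_essSup fun x => ENNReal.ofReal (rho α x * |f x|)] with x hx
  exact (ENNReal.ofReal_le_iff_le_toReal hf.ne).mp hx

lemma weightedNorm_le_ofReal {B : ℝ} (h : ∀ᵐ x, rho α x * |f x| ≤ B) :
    weightedNorm α f ≤ ENNReal.ofReal B :=
  essSup_le_of_ae_le _ (h.mono fun _ hx => ENNReal.ofReal_le_ofReal hx)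

lemma integrable_of_ae_rho_mul_abs_le (hα : 3 < α) (hf : AEStronglyMeasurable f) {B : ℝ}
    (h : ∀ᵐ x, rho α x * |f x| ≤ B) : Integrable f := by
  have hinv : Integrable (fun x : E3 => (rho α x)⁻¹) :=
    integrable_inv_rho volume (by simpa using hα)
  refine (hinv.const_mul B).mono' hf (h.mono fun x hx => ?_)
  rw [Real.norm_eq_abs, ← div_eq_mul_inv, le_div_iff₀' (rho_pos α x)]
  exact hx

end WeightedNorm

section Convolution

variable {f g : E3 → ℝ}

lemma conv3_eq_convolution (f g : E3 → ℝ) :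
    conv3 f g = convolution f g (ContinuousLinearMap.mul ℝ ℝ) volume :=
  funext fun _ => convolution_mul_swap.symm

lemma Measurable.conv3 (hf : Measurable f) (hg : Measurable g) : Measurable (conv3 f g) :=
  ((hf.comp (measurable_fst.sub measurable_snd)).mul
    (hg.comp measurable_snd)).stronglyMeasurable.integral_prod_right'.measurable

lemma MeasureTheory.Integrable.conv3 (hf : Integrable f) (hg : Integrable g) : Integrable (conv3 f g) := by
  rw [conv3_eq_convolution]
  exact hf.integrable_convolution _ hg

lemma abs_conv3_le (f g : E3 → ℝ) (x : E3) :
    |conv3 f g x| ≤ conv3 (fun y => |f y|) (fun y => |g y|) x := by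
  simpa only [conv3, Real.norm_eq_abs, abs_mul] using
    norm_integral_le_integral_norm fun y => f (x - y) * g y

lemma integral_abs_conv3_le (hf : Integrable f) (hg : Integrable g) :
    ∫ x, |conv3 f g x| ≤ (∫ x, |f x|) * ∫ x, |g x| := by
  calc ∫ x, |conv3 f g x| ≤ ∫ x, conv3 (fun y => |f y|) (fun y => |g y|) x :=
        integral_mono (hf.conv3 hg).abs (hf.abs.conv3 hg.abs) (abs_conv3_le f g)
    _ = (∫ x, |f x|) * ∫ x, |g x| := by
        rw [conv3_eq_convolution, integral_convolution _ hf.abs hg.abs]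
        rfl

lemma rho_mul_abs_conv3_le {α m F G : ℝ} (hα : 0 ≤ α) (hm : 1 < m) (hf : Integrable f)
    (hg : Integrable g) (hfF : ∀ᵐ x, rho α x * |f x| ≤ F) (hgG : ∀ᵐ x, rho α x * |g x| ≤ G)
    (x : E3) :
    rho α x * |conv3 f g x| ≤
      (m / (m - 1)) ^ α * F * (∫ y, |g y|) + m ^ α * G * ∫ y, |f y| := by
  set c₁ := (m / (m - 1)) ^ α
  set c₂ := m ^ α
  have hc₁ : 0 ≤ c₁ := Real.rpow_nonneg (div_nonneg (by linarith) (by linarith)) α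
  have hc₂ : 0 ≤ c₂ := Real.rpow_nonneg (by linarith) α
  have hfF' : ∀ᵐ y, rho α (x - y) * |f (x - y)| ≤ F :=
    (Measure.measurePreserving_sub_left volume x).quasiMeasurePreserving.ae hfF
  have hpointwise : ∀ᵐ y, rho α x * |f (x - y) * g y| ≤
      c₁ * F * |g y| + c₂ * G * |f (x - y)| := by
    filter_upwards [hfF', hgG] with y hfy hgy
    calc rho α x * |f (x - y) * g y|
        ≤ (c₁ * rho α (x - y) + c₂ * rho α y) * (|f (x - y)| * |g y|) := by
          rw [abs_mul]; gcongr; exact rho_le_mul_rho_sub_add_mul_rho hα hm x y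
      _ = c₁ * (rho α (x - y) * |f (x - y)|) * |g y| +
            c₂ * (rho α y * |g y|) * |f (x - y)| := by ring
      _ ≤ c₁ * F * |g y| + c₂ * G * |f (x - y)| := by gcongr
  have hbound_int : Integrable fun y => c₁ * F * |g y| + c₂ * G * |f (x - y)| :=
    (hg.abs.const_mul _).add ((hf.comp_sub_left x).abs.const_mul _)
  calc rho α x * |conv3 f g x| ≤ rho α x * ∫ y, |f (x - y) * g y| := by
        gcongr
        · exact (rho_pos α x).le
        · simpa only [conv3, Real.norm_eq_abs] using
            norm_integral_le_integral_norm fun y => f (x - y) * g y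
    _ = ∫ y, rho α x * |f (x - y) * g y| := (integral_const_mul _ _).symm
    -- for a fixed `x`, `y ↦ f (x - y) * g y` need not be integrable; only the majorant has to be
    _ ≤ ∫ y, c₁ * F * |g y| + c₂ * G * |f (x - y)| :=
        integral_mono_of_nonneg (.of_forall fun y => by have := rho_pos α x; positivity)
          hbound_int hpointwise
    _ = c₁ * F * (∫ y, |g y|) + c₂ * G * ∫ y, |f y| := by
        rw [integral_add (hg.abs.const_mul _) ((hf.comp_sub_left x).abs.const_mul _),
          integral_const_mul, integral_const_mul,
          integral_sub_left_eq_self (fun y => |f y|) volume x]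

end Convolution

section IterConv

variable {w : E3 → ℝ}

lemma measurable_iterConv (hw : Measurable w) : ∀ n, Measurable (iterConv w n)
  | 0 => hw
  | n + 1 => (measurable_iterConv hw n).conv3 hw

lemma integrable_iterConv (hw : Integrable w) : ∀ n, Integrable (iterConv w n)
  | 0 => hw
  | n + 1 => (integrable_iterConv hw n).conv3 hw

lemma integral_abs_iterConv_le (hw : Integrable w) :
    ∀ n, ∫ x, |iterConv w n x| ≤ (∫ x, |w x|) ^ (n + 1)
  | 0 => by simp [iterConv]
  | n + 1 => by
    have hw₁ : 0 ≤ ∫ x, |w x| := integral_nonneg fun x => abs_nonneg _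
    calc ∫ x, |iterConv w (n + 1) x| ≤ (∫ x, |iterConv w n x|) * ∫ x, |w x| :=
          integral_abs_conv3_le (integrable_iterConv hw n) hw
      _ ≤ (∫ x, |w x|) ^ (n + 1) * ∫ x, |w x| := by
          gcongr; exact integral_abs_iterConv_le hw n
      _ = (∫ x, |w x|) ^ (n + 2) := by ring

def iterConvBound (α q : ℝ) (n : ℕ) : ℝ := ((n : ℝ) + 1) ^ (α + 1) * q ^ n

lemma summable_iterConvBound (α : ℝ) {q : ℝ} (hq0 : 0 < q) (hq1 : q < 1) :
    Summable (iterConvBound α q) := by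
  obtain ⟨k, hk⟩ := exists_nat_ge (α + 1)
  have hgeom : Summable fun n : ℕ => ((n : ℝ) + 1) ^ k * q ^ n := by
    have hshift := (summable_nat_add_iff (f := fun n : ℕ => (n : ℝ) ^ k * q ^ n) 1).mpr <|
      summable_pow_mul_geometric_of_norm_lt_one (R := ℝ) k (by rwa [Real.norm_of_nonneg hq0.le])
    have := hshift.mul_left q⁻¹
    refine this.congr fun n => ?_
    push_cast
    field_simp
    ring
  refine hgeom.of_nonneg_of_le (fun n => by unfold iterConvBound; positivity) fun n => ?_
  unfold iterConvBound
  gcongr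
  rw [← Real.rpow_natCast]
  exact Real.rpow_le_rpow_of_exponent_le (by linarith [n.cast_nonneg (α := ℝ)]) hk

lemma ae_rho_mul_abs_iterConv_le {α q a : ℝ} (hα : 0 ≤ α) (hw : Integrable w)
    (hwa : ∀ᵐ x, rho α x * |w x| ≤ a) (hwq : ∫ x, |w x| ≤ q) :
    ∀ n, ∀ᵐ x, rho α x * |iterConv w n x| ≤ a * iterConvBound α q n
  | 0 => by simpa [iterConv, iterConvBound] using hwa
  | n + 1 => by
    obtain ⟨x₀, hx₀⟩ := hwa.exists
    have ha : 0 ≤ a := le_trans (by have := rho_pos α x₀; positivity) hx₀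
    have hq : 0 ≤ q := (integral_nonneg fun x => abs_nonneg (w x)).trans hwq
    set m : ℝ := (n : ℝ) + 2
    have hm : 1 < m := by simp only [m]; linarith [n.cast_nonneg (α := ℝ)]
    have hm0 : 0 < m := by linarith
    have hm₁ : m - 1 = (n : ℝ) + 1 := by ring
    have hmpos : 0 < m - 1 := by linarith
    have hL1 : ∫ x, |iterConv w n x| ≤ q ^ (n + 1) :=
      (integral_abs_iterConv_le hw n).trans
        (pow_le_pow_left₀ (integral_nonneg fun x => abs_nonneg _) hwq _)
    have hbound : 0 ≤ a * iterConvBound α q n := by unfold iterConvBound; positivity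
    refine Eventually.of_forall fun x => ?_
    calc rho α x * |iterConv w (n + 1) x|
        ≤ (m / (m - 1)) ^ α * (a * iterConvBound α q n) * (∫ y, |w y|) +
            m ^ α * a * ∫ y, |iterConv w n y| :=
          rho_mul_abs_conv3_le hα hm (integrable_iterConv hw n) hw
            (ae_rho_mul_abs_iterConv_le hα hw hwa hwq n) hwa x
      _ ≤ (m / (m - 1)) ^ α * (a * iterConvBound α q n) * q + m ^ α * a * q ^ (n + 1) := by
          gcongr
      _ = a * iterConvBound α q (n + 1) := by
          simp only [iterConvBound, ← hm₁]
          push_cast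
          rw [show (n : ℝ) + 1 + 1 = m by ring, Real.div_rpow hm0.le hmpos.le,
            Real.rpow_add_one hm0.ne', Real.rpow_add_one hmpos.ne']
          field_simp
          ring

end IterConv

section Series

variable {α : ℝ} {f : ℕ → E3 → ℝ} {b : ℕ → ℝ}

lemma ae_rho_mul_abs_tsum_sub_sum_le (hb : Summable b)
    (hfb : ∀ n, ∀ᵐ x, rho α x * |f n x| ≤ b n) :
    ∀ᵐ x, ∀ N, rho α x * |∑' n, f n x - ∑ n ∈ Finset.range N, f n x| ≤ ∑' k, b (k + N) := by
  filter_upwards [ae_all_iff.mpr hfb] with x hx N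
  have hρ := rho_pos α x
  have hnorm : ∀ n, ‖f n x‖ ≤ b n / rho α x := fun n => by
    rw [Real.norm_eq_abs, le_div_iff₀' hρ]; exact hx n
  have hsum : Summable fun n => f n x := (hb.div_const _).of_norm_bounded hnorm
  rw [← hsum.sum_add_tsum_nat_add N, add_sub_cancel_left, ← le_div_iff₀' hρ,
    ← Real.norm_eq_abs, ← tsum_div_const]
  exact tsum_of_norm_bounded ((summable_nat_add_iff N).mpr (hb.div_const _)).hasSum
    fun k => hnorm (k + N)

lemma weightedNorm_tsum_le (hb : Summable b) (hfb : ∀ n, ∀ᵐ x, rho α x * |f n x| ≤ b n) :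
    weightedNorm α (fun x => ∑' n, f n x) ≤ ENNReal.ofReal (∑' n, b n) :=
  weightedNorm_le_ofReal <| (ae_rho_mul_abs_tsum_sub_sum_le hb hfb).mono fun x hx => by
    simpa using hx 0

lemma tendsto_weightedNorm_tsum_sub_sum (hb : Summable b)
    (hfb : ∀ n, ∀ᵐ x, rho α x * |f n x| ≤ b n) :
    Tendsto (fun N => weightedNorm α fun x => ∑' n, f n x - ∑ n ∈ Finset.range N, f n x)
      atTop (𝓝 0) := by
  have htail : Tendsto (fun N => ENNReal.ofReal (∑' k, b (k + N))) atTop (𝓝 0) := by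
    simpa using ENNReal.tendsto_ofReal (tendsto_sum_nat_add b)
  refine tendsto_of_tendsto_of_tendsto_of_le_of_le tendsto_const_nhds htail (fun _ => zero_le)
    fun N => weightedNorm_le_ofReal ?_
  filter_upwards [ae_rho_mul_abs_tsum_sub_sum_le hb hfb] with x hx using hx N

end Series

/-- Neumann-series convergence in L^∞_ρ(ℝ³) (equations (A.3), (A.8)):
if ‖w‖_{L¹} ≤ q < 1 and w ∈ L^∞_ρ, the series Σ_{n≥1} W_n of the n-fold
autoconvolutions of w converges in ‖·‖_{L^∞_ρ} to some W_Σ with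
‖W_Σ‖_{L^∞_ρ} ≤ C ‖w‖_{L^∞_ρ}, C depending only on α and q. -/
theorem neumann_series_weighted_convergence (α q : ℝ) (hα : 3 < α)
    (hq0 : 0 < q) (hq1 : q < 1) :
    ∃ C : ℝ, 0 < C ∧
      ∀ w : E3 → ℝ, Measurable w → weightedNorm α w < ⊤ →
        (∫ x, |w x|) ≤ q →
        ∃ Wsum : E3 → ℝ, Measurable Wsum ∧
          weightedNorm α Wsum ≤ ENNReal.ofReal C * weightedNorm α w ∧
          Filter.Tendsto
            (fun N => weightedNorm α
              (fun x => Wsum x - ∑ n ∈ Finset.range N, iterConv w n x))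
            Filter.atTop (nhds 0) := by
  have hsummable := summable_iterConvBound α hq0 hq1
  have hC : 1 ≤ ∑' n, iterConvBound α q n := by
    simpa [iterConvBound] using hsummable.le_tsum 0 fun n _ => by
      unfold iterConvBound; positivity
  refine ⟨∑' n, iterConvBound α q n, by linarith, fun w hwm hwfin hwq => ?_⟩
  set a := (weightedNorm α w).toReal
  have hwa : ∀ᵐ x, rho α x * |w x| ≤ a := ae_rho_mul_abs_le_toReal_weightedNorm hwfin
  have hwi : Integrable w := integrable_of_ae_rho_mul_abs_le hα hwm.aestronglyMeasurable hwa
  have hW := ae_rho_mul_abs_iterConv_le (by linarith) hwi hwa hwq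
  have hb := hsummable.mul_left a
  refine ⟨fun x => ∑' n, iterConv w n x, Measurable.tsum (measurable_iterConv hwm),
    (weightedNorm_tsum_le hb hW).trans_eq ?_, tendsto_weightedNorm_tsum_sub_sum hb hW⟩
  rw [tsum_mul_left, ENNReal.ofReal_mul ENNReal.toReal_nonneg, ENNReal.ofReal_toReal hwfin.ne,
    mul_comm]
end
end
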